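/- arXiv:1512.04856 — 5 statements merged into one kernel-verified Lean document; each statement's English description precedes it below -/
import Mathlib

section
/- Let d ≥ 1, let P ⊂ ℝ^d be a finite set of n points and q ∈ ℝ^d. Then σ_P(q) ≤ τ_P(q) · n^d, where σ_P(q) is the simplicial depth and τ_P(q) is the Tukey depth of q with respect to P. -/
/-- The simplicial depth of `q` with respect to a finite point set `P` in `ℝ^d`:
the number of `(d+1)`-element subsets of `P` whose convex hull contains `q`. -/
noncomputable def simplicialDepth (d : ℕ) (P : Finset (EuclideanSpace ℝ (Fin d)))
    (q : EuclideanSpace ℝ (Fin d)) : ℕ :=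
  {S : Finset (EuclideanSpace ℝ (Fin d)) |
    S ⊆ P ∧ S.card = d + 1 ∧ q ∈ convexHull ℝ (S : Set (EuclideanSpace ℝ (Fin d)))}.ncard

/-- The Tukey depth of `q` with respect to `P`: the minimum number of points of `P`
contained in a closed halfspace containing `q`. -/
noncomputable def tukeyDepth (d : ℕ) (P : Finset (EuclideanSpace ℝ (Fin d)))
    (q : EuclideanSpace ℝ (Fin d)) : ℕ :=
  sInf {k : ℕ | ∃ (v : EuclideanSpace ℝ (Fin d)) (c : ℝ), v ≠ 0 ∧ (inner ℝ v q : ℝ) ≤ c ∧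
    {x ∈ (P : Set (EuclideanSpace ℝ (Fin d))) | (inner ℝ v x : ℝ) ≤ c}.ncard = k}

open Finset

theorem exists_mem_inner_le_of_mem_convexHull {E : Type*} [NormedAddCommGroup E]
    [InnerProductSpace ℝ E] {s : Set E} {q : E} (hq : q ∈ convexHull ℝ s) (v : E) :
    ∃ x ∈ s, inner ℝ v x ≤ inner ℝ v q :=
  ((innerₛₗ ℝ v).concaveOn convex_univ).exists_le_of_mem_convexHull (Set.subset_univ s) hq

theorem Finset.card_filter_powersetCard_succ_exists_le {α : Type*} [DecidableEq α]
    (s : Finset α) (n : ℕ) (p : α → Prop) [DecidablePred p] :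
    #{u ∈ s.powersetCard (n + 1) | ∃ x ∈ u, p x} ≤ #{x ∈ s | p x} * (#s).choose n := by
  have hcover : {u ∈ s.powersetCard (n + 1) | ∃ x ∈ u, p x} ⊆
      ({x ∈ s | p x} ×ˢ s.powersetCard n).image fun xt => insert xt.1 xt.2 := by
    intro u hu
    obtain ⟨hu, x, hxu, hx⟩ := mem_filter.1 hu
    obtain ⟨hus, hucard⟩ := mem_powersetCard.1 hu
    refine mem_image.2 ⟨(x, u.erase x), mem_product.2 ⟨mem_filter.2 ⟨hus hxu, hx⟩, ?_⟩,
      insert_erase hxu⟩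
    refine mem_powersetCard.2 ⟨(erase_subset x u).trans hus, ?_⟩
    rw [card_erase_of_mem hxu, hucard, Nat.add_sub_cancel]
  calc _ ≤ _ := card_le_card hcover
    _ ≤ _ := card_image_le
    _ = _ := by rw [card_product, card_powersetCard]

theorem simplicialDepth_le_card_filter {d : ℕ} {P : Finset (EuclideanSpace ℝ (Fin d))}
    {q : EuclideanSpace ℝ (Fin d)} (p : Finset (EuclideanSpace ℝ (Fin d)) → Prop) [DecidablePred p]
    (hp : ∀ S : Finset (EuclideanSpace ℝ (Fin d)), q ∈ convexHull ℝ (S : Set _) → p S) :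
    simplicialDepth d P q ≤ #{S ∈ P.powersetCard (d + 1) | p S} := by
  rw [simplicialDepth, ← Set.ncard_coe_finset]
  refine Set.ncard_le_ncard (fun S ⟨hSP, hScard, hq⟩ => ?_) (Set.toFinite _)
  simpa [mem_powersetCard] using ⟨⟨hSP, hScard⟩, hp S hq⟩

theorem exists_card_halfspace_eq_tukeyDepth {d : ℕ} (hd : 1 ≤ d)
    (P : Finset (EuclideanSpace ℝ (Fin d))) (q : EuclideanSpace ℝ (Fin d)) :
    ∃ (v : EuclideanSpace ℝ (Fin d)) (c : ℝ), v ≠ 0 ∧ inner ℝ v q ≤ c ∧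
      #{x ∈ P | inner ℝ v x ≤ c} = tukeyDepth d P q := by
  have : Nonempty (Fin d) := ⟨⟨0, hd⟩⟩
  obtain ⟨v₀, hv₀⟩ := exists_ne (0 : EuclideanSpace ℝ (Fin d))
  obtain ⟨v, c, hv, hqc, hcard⟩ := Nat.sInf_mem (⟨_, v₀, inner ℝ v₀ q, hv₀, le_rfl, rfl⟩ :
    {k : ℕ | ∃ (v : EuclideanSpace ℝ (Fin d)) (c : ℝ), v ≠ 0 ∧ (inner ℝ v q : ℝ) ≤ c ∧
      {x ∈ (P : Set (EuclideanSpace ℝ (Fin d))) | (inner ℝ v x : ℝ) ≤ c}.ncard = k}.Nonempty)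
  refine ⟨v, c, hv, hqc, ?_⟩
  rw [tukeyDepth, ← hcard, ← Set.ncard_coe_finset, coe_filter]
  rfl

/-- `σ_P(q) ≤ τ_P(q) · n^d`. -/
theorem simplicialDepth_le_tukeyDepth_mul (d : ℕ) (hd : 1 ≤ d)
    (P : Finset (EuclideanSpace ℝ (Fin d))) (q : EuclideanSpace ℝ (Fin d)) :
    simplicialDepth d P q ≤ tukeyDepth d P q * P.card ^ d := by
  obtain ⟨v, c, -, hqc, hcard⟩ := exists_card_halfspace_eq_tukeyDepth hd P q
  have hmeets : ∀ S : Finset (EuclideanSpace ℝ (Fin d)), q ∈ convexHull ℝ (S : Set _) →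
      ∃ x ∈ S, inner ℝ v x ≤ c := fun S hS => by
    obtain ⟨x, hxS, hx⟩ := exists_mem_inner_le_of_mem_convexHull hS v
    exact ⟨x, hxS, hx.trans hqc⟩
  calc simplicialDepth d P q
      ≤ #{S ∈ P.powersetCard (d + 1) | ∃ x ∈ S, inner ℝ v x ≤ c} :=
        simplicialDepth_le_card_filter _ hmeets
    _ ≤ #{x ∈ P | inner ℝ v x ≤ c} * (#P).choose d := card_filter_powersetCard_succ_exists_le ..
    _ ≤ tukeyDepth d P q * #P ^ d := by
        rw [hcard]
        gcongr
        exact Nat.choose_le_pow _ _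
end

section
/- Let d ≥ 1, let P ⊂ ℝ^d be a finite set, q ∈ ℝ^d with σ_P(q) > 0, let L ⊆ P and P' = P ∖ L, and let M > 0 be a real number such that ω_{q;P}(p) ≤ M for every p ∈ P'. Let μ = 2^{−|P'|} Σ_{T ⊆ P'} σ_{L∪T}(q) be the expected simplicial depth over a uniformly random subset T of P'. Then for every t > 0, the number of subsets T ⊆ P' with |σ_{L∪T}(q) − μ| ≥ t is at most 2^{|P'|} · 2·exp(−t² / (2(d+1)·M·σ_P(q))). Equivalently, for a uniformly random subset T of P', Pr[|σ_{L∪T}(q) − μ| ≥ t] ≤ 2·exp(−t²/(2(d+1)Mσ_P(q))). -/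
/-! Adding a point `p ∈ P'` to `T` changes `σ_{L∪T}(q)` by at most `ω_{q;P}(p)`, since every new
simplex contains `p`, and double counting gives `∑_p ω_{q;P}(p) ≤ (d+1) σ_P(q)`, hence
`∑_p ω_{q;P}(p)² ≤ (d+1) M σ_P(q)`. McDiarmid's bounded-differences inequality on the cube of
subsets of `P'` (proved by induction on `P'` from Hoeffding's `cosh x ≤ exp (x²/2)`, followed by
Chernoff's bound) then bounds the deviation count by `2^{|P'|} · 2 exp(-2t² / ∑_p ω(p)²)`,
which is stronger than the claim. -/

open scoped Classical

/-- The weight `ω_{q;P}(p)`: the number of `(d+1)`-element subsets of `P` containing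
`p` whose convex hull contains `q`. -/
noncomputable def weight (d : ℕ) (P : Finset (EuclideanSpace ℝ (Fin d)))
    (q p : EuclideanSpace ℝ (Fin d)) : ℕ :=
  {S : Finset (EuclideanSpace ℝ (Fin d)) |
    S ⊆ P ∧ S.card = d + 1 ∧ p ∈ S ∧
      q ∈ convexHull ℝ (S : Set (EuclideanSpace ℝ (Fin d)))}.ncard

open Finset Real

theorem exp_mul_add_exp_mul_le (l : ℝ) {x y c : ℝ} (h : |y - x| ≤ c) :
    exp (l * x) + exp (l * y) ≤ 2 * exp (l * ((x + y) / 2)) * exp (l ^ 2 * c ^ 2 / 8) := by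
  set δ := (y - x) / 2
  have hsplit : exp (l * x) + exp (l * y) = 2 * exp (l * ((x + y) / 2)) * cosh (l * δ) := by
    have hx : l * x = l * ((x + y) / 2) + -(l * δ) := by simp only [δ]; ring
    have hy : l * y = l * ((x + y) / 2) + l * δ := by simp only [δ]; ring
    rw [cosh_eq, hx, hy, exp_add, exp_add]; ring
  have hδ : (l * δ) ^ 2 / 2 ≤ l ^ 2 * c ^ 2 / 8 := by
    have : (y - x) ^ 2 ≤ c ^ 2 := sq_le_sq' (abs_le.1 h).1 (abs_le.1 h).2
    have := mul_le_mul_of_nonneg_left this (sq_nonneg l)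
    simp only [δ]; nlinarith
  rw [hsplit]
  gcongr
  exact (cosh_le_exp_half_sq _).trans (exp_le_exp.2 hδ)

theorem card_filter_le_mul_exp_le_sum {ι : Type*} (s : Finset ι) (g : ι → ℝ) {l : ℝ} (hl : 0 ≤ l)
    (t : ℝ) : (#{i ∈ s | t ≤ g i} : ℝ) * exp (l * t) ≤ ∑ i ∈ s, exp (l * g i) := by
  rw [← nsmul_eq_mul]
  calc #{i ∈ s | t ≤ g i} • exp (l * t) ≤ ∑ i ∈ s with t ≤ g i, exp (l * g i) :=
        card_nsmul_le_sum _ _ _ fun i hi ↦ exp_le_exp.2 (by gcongr; exact (mem_filter.1 hi).2)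
    _ ≤ ∑ i ∈ s, exp (l * g i) :=
        sum_le_sum_of_subset_of_nonneg (filter_subset _ _) fun _ _ _ ↦ (exp_pos _).le

section BoundedDifferences

variable {α : Type*} [DecidableEq α]

theorem sum_powerset_exp_mul_le {c : α → ℝ} (l : ℝ) (A : Finset α) {f : Finset α → ℝ}
    (hf : ∀ p ∈ A, ∀ T ⊆ A, |f (insert p T) - f T| ≤ c p)
    (hmean : ∑ T ∈ A.powerset, f T = 0) :
    ∑ T ∈ A.powerset, exp (l * f T) ≤ 2 ^ #A * exp (l ^ 2 * (∑ p ∈ A, c p ^ 2) / 8) := by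
  induction A using Finset.induction_on generalizing f with
  | empty => simp_all
  | @insert a s ha ih =>
    rw [sum_powerset_insert ha] at hmean ⊢
    -- averaging over the coordinate `a` preserves the mean and the other differences
    set g : Finset α → ℝ := fun T ↦ (f T + f (insert a T)) / 2
    have hg : ∀ p ∈ s, ∀ T ⊆ s, |g (insert p T) - g T| ≤ c p := by
      intro p hp T hT
      have h₁ := hf p (mem_insert_of_mem hp) T (hT.trans (subset_insert a s))
      have h₂ := hf p (mem_insert_of_mem hp) (insert a T) (insert_subset_insert a hT)
      rw [insert_comm] at h₂
      calc |g (insert p T) - g T|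
          = |(f (insert p T) - f T) + (f (insert a (insert p T)) - f (insert a T))| / 2 := by
            rw [← abs_two, ← abs_div]; congr 1; simp only [g]; ring
        _ ≤ c p := by
            linarith [abs_add_le (f (insert p T) - f T)
              (f (insert a (insert p T)) - f (insert a T))]
    have hg_mean : ∑ T ∈ s.powerset, g T = 0 := by
      simp only [g, ← sum_div, sum_add_distrib, hmean, zero_div]
    calc ∑ T ∈ s.powerset, exp (l * f T) + ∑ T ∈ s.powerset, exp (l * f (insert a T))
        ≤ ∑ T ∈ s.powerset, 2 * exp (l * g T) * exp (l ^ 2 * c a ^ 2 / 8) := by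
          rw [← sum_add_distrib]
          refine sum_le_sum fun T hT ↦ exp_mul_add_exp_mul_le l ?_
          exact hf a (mem_insert_self a s) T ((mem_powerset.1 hT).trans (subset_insert a s))
      _ = 2 * exp (l ^ 2 * c a ^ 2 / 8) * ∑ T ∈ s.powerset, exp (l * g T) := by
          rw [mul_sum]; exact sum_congr rfl fun _ _ ↦ by ring
      _ ≤ 2 * exp (l ^ 2 * c a ^ 2 / 8) * (2 ^ #s * exp (l ^ 2 * (∑ p ∈ s, c p ^ 2) / 8)) := by
          gcongr; exact ih hg hg_mean
      _ = 2 ^ #(insert a s) * exp (l ^ 2 * (∑ p ∈ insert a s, c p ^ 2) / 8) := by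
          rw [card_insert_of_notMem ha, sum_insert ha, pow_succ (2 : ℝ), mul_add, add_div, exp_add]
          ring

theorem mcdiarmid_powerset_card_le {c : α → ℝ} {A : Finset α} {f : Finset α → ℝ}
    (hf : ∀ p ∈ A, ∀ T ⊆ A, |f (insert p T) - f T| ≤ c p)
    (hmean : ∑ T ∈ A.powerset, f T = 0) {V : ℝ} (hV : ∑ p ∈ A, c p ^ 2 ≤ V) (hV₀ : 0 < V)
    {t : ℝ} (ht : 0 ≤ t) :
    (#{T ∈ A.powerset | t ≤ f T} : ℝ) ≤ 2 ^ #A * exp (-2 * t ^ 2 / V) := by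
  -- the Chernoff parameter `l = 4 t / V` minimises `l² V / 8 - l t`
  set l := 4 * t / V
  have hl : 0 ≤ l := by positivity
  have hexp : l ^ 2 * (∑ p ∈ A, c p ^ 2) / 8 - l * t ≤ -2 * t ^ 2 / V := by
    have : l ^ 2 * (∑ p ∈ A, c p ^ 2) ≤ l ^ 2 * V := by gcongr
    have hlV : l * V = 4 * t := div_mul_cancel₀ _ hV₀.ne'
    rw [le_div_iff₀ hV₀]; nlinarith
  calc (#{T ∈ A.powerset | t ≤ f T} : ℝ)
      ≤ 2 ^ #A * exp (l ^ 2 * (∑ p ∈ A, c p ^ 2) / 8) / exp (l * t) := by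
        rw [le_div_iff₀ (exp_pos _)]
        exact (card_filter_le_mul_exp_le_sum _ f hl t).trans (sum_powerset_exp_mul_le l A hf hmean)
    _ ≤ 2 ^ #A * exp (-2 * t ^ 2 / V) := by
        rw [mul_div_assoc, ← exp_sub]; gcongr

theorem mcdiarmid_powerset_card_abs_le {c : α → ℝ} {A : Finset α} {f : Finset α → ℝ}
    (hf : ∀ p ∈ A, ∀ T ⊆ A, |f (insert p T) - f T| ≤ c p)
    (hmean : ∑ T ∈ A.powerset, f T = 0) {V : ℝ} (hV : ∑ p ∈ A, c p ^ 2 ≤ V) (hV₀ : 0 < V)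
    {t : ℝ} (ht : 0 ≤ t) :
    (#{T ∈ A.powerset | t ≤ |f T|} : ℝ) ≤ 2 ^ #A * (2 * exp (-2 * t ^ 2 / V)) := by
  have hf_neg : ∀ p ∈ A, ∀ T ⊆ A, |-f (insert p T) - -f T| ≤ c p := fun p hp T hT ↦ by
    rw [← abs_neg]; convert hf p hp T hT using 2; ring
  have hmean_neg : ∑ T ∈ A.powerset, -f T = 0 := by rw [sum_neg_distrib, hmean, neg_zero]
  have hsplit : {T ∈ A.powerset | t ≤ |f T|} =
      {T ∈ A.powerset | t ≤ f T} ∪ {T ∈ A.powerset | t ≤ -f T} := by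
    simp only [le_abs, filter_or]
  calc (#{T ∈ A.powerset | t ≤ |f T|} : ℝ)
      ≤ #{T ∈ A.powerset | t ≤ f T} + #{T ∈ A.powerset | t ≤ -f T} := by
        rw [hsplit]; exact_mod_cast card_union_le _ _
    _ ≤ 2 ^ #A * exp (-2 * t ^ 2 / V) + 2 ^ #A * exp (-2 * t ^ 2 / V) :=
        add_le_add (mcdiarmid_powerset_card_le hf hmean hV hV₀ ht)
          (mcdiarmid_powerset_card_le (f := fun T ↦ -f T) hf_neg hmean_neg hV hV₀ ht)
    _ = 2 ^ #A * (2 * exp (-2 * t ^ 2 / V)) := by ring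

end BoundedDifferences

section SimplicialDepth

variable {d : ℕ} {q : EuclideanSpace ℝ (Fin d)}

noncomputable def coveringSimplices (d : ℕ) (B : Finset (EuclideanSpace ℝ (Fin d)))
    (q : EuclideanSpace ℝ (Fin d)) : Finset (Finset (EuclideanSpace ℝ (Fin d))) :=
  {S ∈ B.powerset | #S = d + 1 ∧ q ∈ convexHull ℝ (S : Set (EuclideanSpace ℝ (Fin d)))}

theorem simplicialDepth_eq_card_coveringSimplices (B : Finset (EuclideanSpace ℝ (Fin d))) :
    simplicialDepth d B q = #(coveringSimplices d B q) := by
  rw [simplicialDepth, ← Set.ncard_coe_finset]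
  congr 1; ext S
  simp [coveringSimplices]

theorem weight_eq_card_filter_mem (P : Finset (EuclideanSpace ℝ (Fin d)))
    (p : EuclideanSpace ℝ (Fin d)) :
    weight d P q p = #{S ∈ coveringSimplices d P q | p ∈ S} := by
  rw [weight, ← Set.ncard_coe_finset]
  congr 1; ext S
  simp only [Set.mem_ofPred_eq, coveringSimplices, coe_filter, mem_filter, mem_powerset]
  tauto

theorem coveringSimplices_mono {B B' : Finset (EuclideanSpace ℝ (Fin d))} (h : B ⊆ B') :
    coveringSimplices d B q ⊆ coveringSimplices d B' q :=
  filter_subset_filter _ (powerset_mono.2 h)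

theorem coveringSimplices_insert_subset {P B : Finset (EuclideanSpace ℝ (Fin d))}
    {p : EuclideanSpace ℝ (Fin d)} (hB : B ⊆ P) (hp : p ∈ P) :
    coveringSimplices d (insert p B) q ⊆
      coveringSimplices d B q ∪ {S ∈ coveringSimplices d P q | p ∈ S} := by
  intro S hS
  by_cases hpS : p ∈ S
  · exact mem_union_right _ <| mem_filter.2
      ⟨coveringSimplices_mono (insert_subset hp hB) hS, hpS⟩
  · simp only [coveringSimplices, mem_filter, mem_powerset] at hS
    exact mem_union_left _ <| mem_filter.2
      ⟨mem_powerset.2 fun x hx ↦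
        (mem_insert.1 (hS.1 hx)).resolve_left (by rintro rfl; exact hpS hx), hS.2⟩

theorem abs_simplicialDepth_insert_sub_le {P B : Finset (EuclideanSpace ℝ (Fin d))}
    {p : EuclideanSpace ℝ (Fin d)} (hB : B ⊆ P) (hp : p ∈ P) :
    |(simplicialDepth d (insert p B) q : ℝ) - simplicialDepth d B q| ≤ weight d P q p := by
  simp only [simplicialDepth_eq_card_coveringSimplices, weight_eq_card_filter_mem]
  have hle : #(coveringSimplices d B q) ≤ #(coveringSimplices d (insert p B) q) :=
    card_le_card (coveringSimplices_mono (subset_insert p B))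
  have hge := (card_le_card (coveringSimplices_insert_subset (q := q) hB hp)).trans
    (card_union_le _ _)
  rw [abs_of_nonneg (sub_nonneg.2 (by exact_mod_cast hle)), sub_le_iff_le_add']
  exact_mod_cast hge

theorem sum_weight_le (P A : Finset (EuclideanSpace ℝ (Fin d))) :
    ∑ p ∈ A, weight d P q p ≤ (d + 1) * simplicialDepth d P q := by
  simp only [weight_eq_card_filter_mem, simplicialDepth_eq_card_coveringSimplices]
  calc ∑ p ∈ A, #{S ∈ coveringSimplices d P q | p ∈ S}
      = ∑ S ∈ coveringSimplices d P q, #{p ∈ A | p ∈ S} :=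
        sum_card_bipartiteAbove_eq_sum_card_bipartiteBelow (· ∈ ·)
    _ ≤ ∑ S ∈ coveringSimplices d P q, (d + 1) := sum_le_sum fun S hS ↦
        (card_le_card fun _ hp ↦ (mem_filter.1 hp).2).trans_eq (mem_filter.1 hS).2.1
    _ = (d + 1) * #(coveringSimplices d P q) := by rw [sum_const, smul_eq_mul, mul_comm]

theorem sum_weight_sq_le {P A : Finset (EuclideanSpace ℝ (Fin d))} {M : ℝ} (hM : 0 ≤ M)
    (hw : ∀ p ∈ A, (weight d P q p : ℝ) ≤ M) :
    ∑ p ∈ A, (weight d P q p : ℝ) ^ 2 ≤ (d + 1) * M * simplicialDepth d P q :=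
  calc ∑ p ∈ A, (weight d P q p : ℝ) ^ 2
      ≤ ∑ p ∈ A, M * weight d P q p := sum_le_sum fun p hp ↦ by
        rw [sq]; gcongr; exact hw p hp
    _ = M * ∑ p ∈ A, (weight d P q p : ℝ) := (mul_sum ..).symm
    _ ≤ M * ((d + 1) * simplicialDepth d P q) := by
        gcongr; exact_mod_cast sum_weight_le P A
    _ = (d + 1) * M * simplicialDepth d P q := by ring

end SimplicialDepth

theorem simplicialDepth_concentration_general (d : ℕ)
    (P : Finset (EuclideanSpace ℝ (Fin d))) (q : EuclideanSpace ℝ (Fin d))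
    (hσ : 0 < simplicialDepth d P q)
    (L : Finset (EuclideanSpace ℝ (Fin d))) (hL : L ⊆ P)
    (M : ℝ) (hM : 0 < M)
    (hw : ∀ p ∈ P \ L, (weight d P q p : ℝ) ≤ M)
    (μ : ℝ)
    (hμ : μ = (∑ T ∈ (P \ L).powerset, (simplicialDepth d (L ∪ T) q : ℝ)) /
            2 ^ (P \ L).card)
    (t : ℝ) (ht : 0 < t) :
    ({T : Finset (EuclideanSpace ℝ (Fin d)) | T ⊆ P \ L ∧
        t ≤ |(simplicialDepth d (L ∪ T) q : ℝ) - μ|}.ncard : ℝ)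
      ≤ 2 ^ (P \ L).card *
          (2 * Real.exp (-(t ^ 2) /
            (2 * (d + 1) * M * simplicialDepth d P q))) := by
  set f : Finset (EuclideanSpace ℝ (Fin d)) → ℝ := fun T ↦ simplicialDepth d (L ∪ T) q - μ
  have hf : ∀ p ∈ P \ L, ∀ T ⊆ P \ L, |f (insert p T) - f T| ≤ weight d P q p := fun p hp T hT ↦ by
    simpa only [f, union_insert, sub_sub_sub_cancel_right] using
      abs_simplicialDepth_insert_sub_le (union_subset hL (hT.trans sdiff_subset)) (mem_sdiff.1 hp).1
  have hmean : ∑ T ∈ (P \ L).powerset, f T = 0 := by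
    simp only [f, sum_sub_distrib, sum_const, card_powerset, nsmul_eq_mul, hμ]
    push_cast; field_simp; ring
  set V : ℝ := (d + 1) * M * simplicialDepth d P q
  have hV₀ : 0 < V := by positivity
  have hset : {T | T ⊆ P \ L ∧ t ≤ |(simplicialDepth d (L ∪ T) q : ℝ) - μ|} =
      ↑({T ∈ (P \ L).powerset | t ≤ |f T|}) := by
    ext T; simp [f]
  rw [hset, Set.ncard_coe_finset]
  have hexp : -2 * t ^ 2 / V ≤ -(t ^ 2) / (2 * (d + 1) * M * simplicialDepth d P q) := by
    rw [show 2 * ((d : ℝ) + 1) * M * simplicialDepth d P q = 2 * V by ring, neg_div,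
      div_le_iff₀ hV₀]
    field_simp; nlinarith [sq_nonneg t]
  refine (mcdiarmid_powerset_card_abs_le hf hmean (sum_weight_sq_le hM.le hw) hV₀ ht.le).trans ?_
  gcongr 2 ^ _ * (2 * exp ?_)

/-- Azuma-type concentration: if every point of `P' = P \ L` has weight
at most `M`, then the number of subsets `T ⊆ P'` on which `σ_{L∪T}(q)` deviates from
its mean `μ` by at least `t` is at most
`2^{|P'|} · 2·exp(−t²/(2(d+1)·M·σ_P(q)))`. -/
theorem simplicialDepth_concentration (d : ℕ) (hd : 1 ≤ d)
    (P : Finset (EuclideanSpace ℝ (Fin d))) (q : EuclideanSpace ℝ (Fin d))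
    (hσ : 0 < simplicialDepth d P q)
    (L : Finset (EuclideanSpace ℝ (Fin d))) (hL : L ⊆ P)
    (M : ℝ) (hM : 0 < M)
    (hw : ∀ p ∈ P \ L, (weight d P q p : ℝ) ≤ M)
    (μ : ℝ)
    (hμ : μ = (∑ T ∈ (P \ L).powerset, (simplicialDepth d (L ∪ T) q : ℝ)) /
            2 ^ (P \ L).card)
    (t : ℝ) (ht : 0 < t) :
    ({T : Finset (EuclideanSpace ℝ (Fin d)) | T ⊆ P \ L ∧
        t ≤ |(simplicialDepth d (L ∪ T) q : ℝ) - μ|}.ncard : ℝ)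
      ≤ 2 ^ (P \ L).card *
          (2 * Real.exp (-(t ^ 2) /
            (2 * (d + 1) * M * simplicialDepth d P q))) :=
  simplicialDepth_concentration_general d P q hσ L hL M hM hw μ hμ t ht
end

section
/- Let P ⊂ ℝ² be a finite set, q ∈ ℝ² with q ∉ P, and suppose no three points of P ∪ {q} are collinear. Let h be a closed halfplane whose boundary line passes through q, let m = |P ∩ h|, and let p ∈ P ∩ h. Let ℓ be the line through p and q, and let n₁ and n₂ be the numbers of points of P lying strictly on each of the two open sides of ℓ. If n₁ ≥ m and n₂ ≥ m, then (n₁ − m)(n₂ − m) ≤ ω_{q;P}(p) ≤ n₁ · n₂. Moreover, if 0 < ε ≤ 1 and n₁, n₂ ≥ 2m/ε, then (1 − ε)·n₁·n₂ ≤ ω_{q;P}(p) ≤ n₁·n₂, i.e., n₁n₂ is a relative (1+O(ε))-approximation of ω_{q;P}(p). -/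
open scoped Classical

/-- The weight `ω_{q;P}(p)` in the plane: the number of 3-element subsets of `P`
containing `p` whose convex hull contains `q`. -/
noncomputable def weight2 (P : Finset (EuclideanSpace ℝ (Fin 2)))
    (q p : EuclideanSpace ℝ (Fin 2)) : ℕ :=
  {S : Finset (EuclideanSpace ℝ (Fin 2)) |
    S ⊆ P ∧ S.card = 3 ∧ p ∈ S ∧
      q ∈ convexHull ℝ (S : Set (EuclideanSpace ℝ (Fin 2)))}.ncard

/-!
Every triangle `{p, a, b}` counted by `ω_{q;P}(p)` has `a` and `b` strictly on opposite sides of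
the line `ℓ = pq`: general position keeps them off `ℓ`, and a triangle with `p` on `ℓ` and the
other two vertices on one side of `ℓ` meets `ℓ` only in `p ≠ q`. This gives the upper bound
`n₁ n₂`.

Conversely, `p` lies in the interior of `h`: otherwise `ℓ` is the boundary of `h`, and `h`
contains `p` together with a whole open side of `ℓ`, forcing `m > n₁` or `m > n₂`. Then for `a`
and `b` on opposite sides of `ℓ`, both outside `h`, the segment `ab` crosses `ℓ` outside `h`, so on
the other side of `q` from `p`, and the triangle `pab` contains `q`. At least `nᵢ - m` points of
each side lie outside `h`, which gives the lower bound; the `ε`-form is arithmetic.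
-/

open Module Finset
open scoped RealInnerProductSpace

lemma ncard_coe_sep {α : Type*} (P : Finset α) (r : α → Prop) [DecidablePred r] :
    {x ∈ (P : Set α) | r x}.ncard = #{x ∈ P | r x} := by
  rw [← Set.ncard_coe_finset, Finset.coe_filter]
  simp only [Finset.mem_coe]

lemma injOn_insert_pair {α : Type*} [DecidableEq α] {f : α → ℝ} {p : α} (hp : f p = 0) :
    Set.InjOn (fun ab : α × α => ({p, ab.1, ab.2} : Finset α))
      ({x | 0 < f x} ×ˢ {x | f x < 0}) := by
  rintro ⟨a, b⟩ ⟨ha, hb⟩ ⟨a', b'⟩ ⟨ha', hb'⟩ h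
  simp only [Set.mem_ofPred_eq] at ha hb ha' hb'
  replace h : ({p, a, b} : Finset α) = {p, a', b'} := h
  have ha_mem : a ∈ ({p, a', b'} : Finset α) := h ▸ by simp
  have hb_mem : b ∈ ({p, a', b'} : Finset α) := h ▸ by simp
  simp only [Finset.mem_insert, Finset.mem_singleton] at ha_mem hb_mem
  refine Prod.ext ?_ ?_
  · rcases ha_mem with rfl | rfl | rfl <;> first | rfl | (exfalso; linarith)
  · rcases hb_mem with rfl | rfl | rfl <;> first | rfl | (exfalso; linarith)

lemma one_sub_mul_mul_le_sub_mul_sub {ε m x y : ℝ} (hε : 0 < ε) (hm : 0 ≤ m)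
    (hx : 2 * m / ε ≤ x) (hy : 2 * m / ε ≤ y) :
    (1 - ε) * x * y ≤ (x - m) * (y - m) := by
  rw [div_le_iff₀ hε] at hx hy
  have hx₀ : 0 ≤ x := by nlinarith
  have hy₀ : 0 ≤ y := by nlinarith
  nlinarith [mul_le_mul_of_nonneg_left hx hy₀, mul_le_mul_of_nonneg_left hy hx₀]

section

variable {E : Type*} [NormedAddCommGroup E] [InnerProductSpace ℝ E]

lemma inner_smul_add_smul_sub {α β : ℝ} (hαβ : α + β = 1) (w a b q : E) :
    ⟪w, α • a + β • b - q⟫ = α * ⟪w, a - q⟫ + β * ⟪w, b - q⟫ := by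
  have : α • a + β • b - q = α • (a - q) + β • (b - q) := by
    rw [smul_sub, smul_sub, sub_add_sub_comm, ← add_smul, hαβ, one_smul]
  rw [this, inner_add_right, real_inner_smul_right, real_inner_smul_right]

lemma mem_convexHull_triple_iff {p a b q : E} :
    q ∈ convexHull ℝ {p, a, b} ↔ ∃ z ∈ segment ℝ a b, q ∈ segment ℝ p z := by
  rw [convexHull_insert (Set.insert_nonempty a {b}), convexHull_pair, convexJoin_singleton_left]
  simp only [Set.mem_iUnion, exists_prop]

lemma inner_sub_mul_inner_sub_neg_of_mem_convexHull {w p q a b : E} (hqp : q ≠ p)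
    (hwp : ⟪w, p - q⟫ = 0) (hwa : ⟪w, a - q⟫ ≠ 0) (hwb : ⟪w, b - q⟫ ≠ 0)
    (hq : q ∈ convexHull ℝ {p, a, b}) :
    ⟪w, a - q⟫ * ⟪w, b - q⟫ < 0 := by
  obtain ⟨_, ⟨α, β, hα, hβ, hαβ, rfl⟩, μ, ν, -, -, hμν, hq⟩ := mem_convexHull_triple_iff.1 hq
  have hν : ν ≠ 0 := by
    rintro rfl
    obtain rfl : μ = 1 := by linarith
    rw [zero_smul, add_zero, one_smul] at hq
    exact hqp hq.symm
  have hwq := inner_smul_add_smul_sub hμν w p (α • a + β • b) q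
  rw [hq, sub_self, inner_zero_right, hwp, inner_smul_add_smul_sub hαβ, mul_zero, zero_add,
    zero_eq_mul] at hwq
  have hz : α * ⟪w, a - q⟫ + β * ⟪w, b - q⟫ = 0 := hwq.resolve_left hν
  have hα : 0 < α := by
    refine lt_of_le_of_ne hα fun hα0 => hwb ?_
    rw [← hα0, zero_mul, zero_add, mul_eq_zero] at hz
    exact hz.resolve_left (by linarith)
  by_contra! hsame
  have : α * (⟪w, a - q⟫ * ⟪w, a - q⟫) + β * (⟪w, a - q⟫ * ⟪w, b - q⟫) = 0 := by
    linear_combination ⟪w, a - q⟫ * hz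
  linarith [mul_pos hα (mul_self_pos.2 hwa), mul_nonneg hβ hsame]

lemma not_collinear_of_affineIndependent {S : Finset E} (hS : S.card = 3)
    (h : AffineIndependent ℝ (fun x : S => (x : E))) : ¬ Collinear ℝ (S : Set E) := by
  have hrange : Set.range (fun x : S => (x : E)) = S := by ext; simp
  rw [affineIndependent_iff_not_finrank_vectorSpan_le ℝ _ (n := 1) (by simp [hS])] at h
  rwa [← hrange, collinear_iff_finrank_le_one]

/-- `weight2 P q p` is, by definition, the cardinality of `trianglesAt P q p`. -/
def trianglesAt (P : Finset E) (q p : E) : Set (Finset E) :=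
  {S | S ⊆ P ∧ S.card = 3 ∧ p ∈ S ∧ q ∈ convexHull ℝ (S : Set E)}

lemma trianglesAt_subset_image [DecidableEq E] {P : Finset E} {w p q : E} (hqp : q ≠ p)
    (hwp : ⟪w, p - q⟫ = 0) (hoff : ∀ a ∈ P, a ≠ p → ⟪w, a - q⟫ ≠ 0) :
    trianglesAt P q p ⊆ (fun ab : E × E => ({p, ab.1, ab.2} : Finset E)) ''
      ↑({x ∈ P | 0 < ⟪w, x - q⟫} ×ˢ {x ∈ P | ⟪w, x - q⟫ < 0}) := by
  rintro S ⟨hSP, hS, hpS, hq⟩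
  obtain ⟨a, b, -, hab⟩ :=
    card_eq_two.1 (show #(S.erase p) = 2 by rw [card_erase_of_mem hpS, hS])
  have hSab : S = {p, a, b} := by rw [← hab, insert_erase hpS]
  obtain ⟨hap, haS⟩ := mem_erase.1 (show a ∈ S.erase p by simp [hab])
  obtain ⟨hbp, hbS⟩ := mem_erase.1 (show b ∈ S.erase p by simp [hab])
  have haP := hSP haS
  have hbP := hSP hbS
  have hsides : ⟪w, a - q⟫ * ⟪w, b - q⟫ < 0 :=
    inner_sub_mul_inner_sub_neg_of_mem_convexHull hqp hwp (hoff a haP hap) (hoff b hbP hbp)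
      (by simpa [hSab] using hq)
  rcases (hoff a haP hap).lt_or_gt with hwa | hwa
  · refine ⟨(b, a), ?_, by rw [hSab]; exact congrArg (insert p) (pair_comm b a)⟩
    simp [haP, hbP, hwa, pos_of_mul_neg_right hsides hwa.le]
  · refine ⟨(a, b), ?_, hSab.symm⟩
    simp [haP, hbP, hwa, neg_of_mul_neg_right hsides hwa.le]

lemma ncard_trianglesAt_le [DecidableEq E] {P : Finset E} {w p q : E} (hqp : q ≠ p)
    (hwp : ⟪w, p - q⟫ = 0) (hoff : ∀ a ∈ P, a ≠ p → ⟪w, a - q⟫ ≠ 0) :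
    (trianglesAt P q p).ncard ≤ #{x ∈ P | 0 < ⟪w, x - q⟫} * #{x ∈ P | ⟪w, x - q⟫ < 0} := by
  rw [← card_product, ← Set.ncard_coe_finset]
  exact (Set.ncard_le_ncard (trianglesAt_subset_image hqp hwp hoff) (Set.toFinite _)).trans
    (Set.ncard_image_le (Finset.finite_toSet _))

section Plane

variable [Fact (finrank ℝ E = 2)]

lemma inner_sub_ne_zero_of_not_collinear {w p q a : E} (hw : w ≠ 0) (hpq : p ≠ q)
    (hwp : ⟪w, p - q⟫ = 0) (h : ¬ Collinear ℝ {p, q, a}) : ⟪w, a - q⟫ ≠ 0 := by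
  intro hwa
  obtain ⟨r, hr⟩ := Submodule.mem_span_singleton.1 <|
    Submodule.mem_span_singleton_of_inner_eq_zero_of_inner_eq_zero hw (sub_ne_zero.2 hpq) hwa hwp
  have ha : AffineMap.lineMap q p r = a := by
    rw [AffineMap.lineMap_apply, vsub_eq_sub, vadd_eq_add, hr, sub_add_cancel]
  apply h
  rw [Set.insert_comm, Set.pair_comm, Set.insert_comm]
  exact collinear_insert_of_mem_affineSpan_pair (ha ▸ AffineMap.lineMap_mem_affineSpan_pair r q p)

lemma mem_convexHull_triple_of_inner_signs {v w p q a b : E} (hw : w ≠ 0) (hpq : p ≠ q)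
    (hwp : ⟪w, p - q⟫ = 0) (hwa : 0 < ⟪w, a - q⟫) (hwb : ⟪w, b - q⟫ < 0)
    (hvp : ⟪v, p - q⟫ < 0) (hva : 0 < ⟪v, a - q⟫) (hvb : 0 < ⟪v, b - q⟫) :
    q ∈ convexHull ℝ {p, a, b} := by
  -- `z` is where the segment `[a, b]` crosses the line through `p` and `q`
  set t := ⟪w, a - q⟫ / (⟪w, a - q⟫ - ⟪w, b - q⟫)
  have ht₀ : 0 ≤ t := div_nonneg hwa.le (by linarith)
  have ht₁ : t < 1 := (div_lt_one (by linarith)).2 (by linarith)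
  set z := (1 - t) • a + t • b
  have hwz : ⟪w, z - q⟫ = 0 := by
    have ht : t * (⟪w, a - q⟫ - ⟪w, b - q⟫) = ⟪w, a - q⟫ := div_mul_cancel₀ _ (by linarith)
    rw [inner_smul_add_smul_sub (by ring)]
    linear_combination -ht
  have hvz : 0 < ⟪v, z - q⟫ := by
    rw [inner_smul_add_smul_sub (by ring)]
    exact add_pos_of_pos_of_nonneg (mul_pos (by linarith) hva) (mul_nonneg ht₀ hvb.le)
  obtain ⟨s, hs⟩ := Submodule.mem_span_singleton.1 <|
    Submodule.mem_span_singleton_of_inner_eq_zero_of_inner_eq_zero hw (sub_ne_zero.2 hpq) hwz hwp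
  have hs₀ : s < 0 := by
    rw [← hs, real_inner_smul_right] at hvz
    exact neg_of_mul_pos_left hvz hvp.le
  have hqz : q ∈ segment ℝ p z := by
    rw [mem_segment_iff_sameRay, ← hs, ← neg_sub q p, smul_neg, ← neg_smul]
    exact SameRay.sameRay_nonneg_smul_right _ (by linarith)
  exact mem_convexHull_triple_iff.2 ⟨z, ⟨1 - t, t, by linarith, ht₀, by ring, rfl⟩, hqz⟩

lemma inner_sub_neg_of_card_halfspace_le {P : Finset E} {v w p q : E} (hpP : p ∈ P)
    (hpq : p ≠ q) (hw : w ≠ 0) (hwp : ⟪w, p - q⟫ = 0) (hvp : ⟪v, p - q⟫ ≤ 0)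
    (h₁ : #{x ∈ P | ⟪v, x - q⟫ ≤ 0} ≤ #{x ∈ P | 0 < ⟪w, x - q⟫})
    (h₂ : #{x ∈ P | ⟪v, x - q⟫ ≤ 0} ≤ #{x ∈ P | ⟪w, x - q⟫ < 0}) :
    ⟪v, p - q⟫ < 0 := by
  refine hvp.lt_of_ne fun hvp₀ => ?_
  -- both `v` and `w` are normal to the line through `p` and `q`
  obtain ⟨k, rfl⟩ := Submodule.mem_span_singleton.1 <|
    Submodule.mem_span_singleton_of_inner_eq_zero_of_inner_eq_zero (sub_ne_zero.2 hpq) hw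
      (by rwa [real_inner_comm]) (by rwa [real_inner_comm])
  simp only [real_inner_smul_left] at h₁ h₂
  have card_lt : ∀ side : ℝ → Prop, (∀ t, side t → k * t ≤ 0) → ¬ side 0 →
      #{x ∈ P | side ⟪w, x - q⟫} < #{x ∈ P | k * ⟪w, x - q⟫ ≤ 0} := by
    intro side hside hside₀
    refine card_lt_card ((Finset.ssubset_iff_of_subset ?_).2 ⟨p, ?_, ?_⟩)
    · exact monotone_filter_right P fun x _ => hside _
    · simp [hpP, hwp]
    · simp [hwp, hside₀]
  rcases le_total 0 k with hk | hk
  · exact (card_lt (· < 0) (fun t ht => mul_nonpos_of_nonneg_of_nonpos hk ht.le)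
      (lt_irrefl 0)).not_ge h₂
  · exact (card_lt (0 < ·) (fun t ht => mul_nonpos_of_nonpos_of_nonneg hk ht.le)
      (lt_irrefl 0)).not_ge h₁

lemma image_subset_trianglesAt [DecidableEq E] {P : Finset E} {v w p q : E} (hpP : p ∈ P)
    (hw : w ≠ 0) (hpq : p ≠ q) (hwp : ⟪w, p - q⟫ = 0) (hvp : ⟪v, p - q⟫ < 0) :
    (fun ab : E × E => ({p, ab.1, ab.2} : Finset E)) ''
      ↑(({x ∈ P | 0 < ⟪w, x - q⟫} \ {x ∈ P | ⟪v, x - q⟫ ≤ 0}) ×ˢ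
        ({x ∈ P | ⟪w, x - q⟫ < 0} \ {x ∈ P | ⟪v, x - q⟫ ≤ 0})) ⊆ trianglesAt P q p := by
  rintro _ ⟨⟨a, b⟩, hab, rfl⟩
  simp only [mem_coe, mem_product, mem_sdiff, mem_filter, not_and, not_le] at hab
  obtain ⟨⟨⟨haP, hwa⟩, hva⟩, ⟨hbP, hwb⟩, hvb⟩ := hab
  have hpa : p ≠ a := by rintro rfl; linarith
  have hpb : p ≠ b := by rintro rfl; linarith
  have hab : a ≠ b := by rintro rfl; linarith
  refine ⟨by simp [insert_subset_iff, hpP, haP, hbP],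
    card_eq_three.2 ⟨p, a, b, hpa, hpb, hab, rfl⟩, by simp, ?_⟩
  push_cast
  exact mem_convexHull_triple_of_inner_signs hw hpq hwp hwa hwb hvp (hva haP) (hvb hbP)

lemma card_mul_card_le_ncard_trianglesAt [DecidableEq E] {P : Finset E} {v w p q : E}
    (hpP : p ∈ P) (hw : w ≠ 0) (hpq : p ≠ q) (hwp : ⟪w, p - q⟫ = 0) (hvp : ⟪v, p - q⟫ < 0) :
    #({x ∈ P | 0 < ⟪w, x - q⟫} \ {x ∈ P | ⟪v, x - q⟫ ≤ 0}) *
      #({x ∈ P | ⟪w, x - q⟫ < 0} \ {x ∈ P | ⟪v, x - q⟫ ≤ 0}) ≤ (trianglesAt P q p).ncard := by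
  have hinj := injOn_insert_pair (f := fun x => ⟪w, x - q⟫) hwp
  rw [← card_product, ← Set.ncard_coe_finset, ← (hinj.mono ?_).ncard_image]
  · exact Set.ncard_le_ncard (image_subset_trianglesAt hpP hw hpq hwp hvp)
      ((P.powerset.finite_toSet).subset fun S hS => mem_powerset.2 hS.1)
  · intro ab hab
    simp only [mem_coe, mem_product, mem_sdiff, mem_filter] at hab
    exact ⟨hab.1.1.2, hab.2.1.2⟩

end Plane

end

instance : Fact (finrank ℝ (EuclideanSpace ℝ (Fin 2)) = 2) := ⟨finrank_euclideanSpace_fin⟩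

theorem weight_approx_2d_general (P : Finset (EuclideanSpace ℝ (Fin 2)))
    (q : EuclideanSpace ℝ (Fin 2)) (hqP : q ∉ P)
    (hgp : ∀ S : Finset (EuclideanSpace ℝ (Fin 2)),
      ↑S ⊆ (↑P ∪ {q} : Set (EuclideanSpace ℝ (Fin 2))) → S.card = 3 →
        AffineIndependent ℝ (fun x : S => (x : EuclideanSpace ℝ (Fin 2))))
    (v : EuclideanSpace ℝ (Fin 2)) (c : ℝ)
    (hqc : (inner ℝ v q : ℝ) = c)
    (m : ℕ)
    (hm : m = {x ∈ (P : Set (EuclideanSpace ℝ (Fin 2))) | (inner ℝ v x : ℝ) ≤ c}.ncard)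
    (p : EuclideanSpace ℝ (Fin 2)) (hpP : p ∈ P) (hph : (inner ℝ v p : ℝ) ≤ c)
    (w : EuclideanSpace ℝ (Fin 2)) (hw : w ≠ 0) (hperp : (inner ℝ w (p - q) : ℝ) = 0)
    (n₁ n₂ : ℕ)
    (hn₁ : n₁ = {x ∈ (P : Set (EuclideanSpace ℝ (Fin 2))) |
      0 < (inner ℝ w (x - q) : ℝ)}.ncard)
    (hn₂ : n₂ = {x ∈ (P : Set (EuclideanSpace ℝ (Fin 2))) |
      (inner ℝ w (x - q) : ℝ) < 0}.ncard)
    (hmn₁ : m ≤ n₁) (hmn₂ : m ≤ n₂) :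
    ((n₁ - m) * (n₂ - m) ≤ weight2 P q p ∧ weight2 P q p ≤ n₁ * n₂) ∧
    ∀ ε : ℝ, 0 < ε → ε ≤ 1 → 2 * m / ε ≤ (n₁ : ℝ) → 2 * m / ε ≤ (n₂ : ℝ) →
      (1 - ε) * n₁ * n₂ ≤ (weight2 P q p : ℝ) ∧ (weight2 P q p : ℝ) ≤ n₁ * n₂ := by
  subst hqc
  simp only [← sub_nonpos (b := ⟪v, q⟫), ← inner_sub_right, ncard_coe_sep] at hm hn₁ hn₂ hph
  have hpq : p ≠ q := fun h => hqP (h ▸ hpP)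
  have hoff : ∀ a ∈ P, a ≠ p → ⟪w, a - q⟫ ≠ 0 := fun a haP hap => by
    have hqa : q ≠ a := fun h => hqP (h ▸ haP)
    have h3 : #{p, q, a} = 3 := card_eq_three.2 ⟨p, q, a, hpq, Ne.symm hap, hqa, rfl⟩
    refine inner_sub_ne_zero_of_not_collinear hw hpq hperp ?_
    simpa using not_collinear_of_affineIndependent h3
      (hgp _ (by simp [Set.insert_subset_iff, hpP, haP]) h3)
  have hvp : ⟪v, p - q⟫ < 0 := by
    subst hm hn₁ hn₂
    exact inner_sub_neg_of_card_halfspace_le hpP hpq hw hperp hph hmn₁ hmn₂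
  have hupper : weight2 P q p ≤ n₁ * n₂ := by
    subst hn₁ hn₂
    exact ncard_trianglesAt_le hpq.symm hperp hoff
  have hlower : (n₁ - m) * (n₂ - m) ≤ weight2 P q p := by
    subst hm hn₁ hn₂
    exact (Nat.mul_le_mul (le_card_sdiff _ _) (le_card_sdiff _ _)).trans
      (card_mul_card_le_ncard_trianglesAt hpP hw hpq hperp hvp)
  refine ⟨⟨hlower, hupper⟩, fun ε hε _ h₁ h₂ => ⟨?_, by exact_mod_cast hupper⟩⟩
  calc (1 - ε) * n₁ * n₂ ≤ (n₁ - m) * (n₂ - m) :=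
        one_sub_mul_mul_le_sub_mul_sub hε m.cast_nonneg h₁ h₂
    _ = ((n₁ - m) * (n₂ - m) : ℕ) := by push_cast [hmn₁, hmn₂]; rfl
    _ ≤ weight2 P q p := by exact_mod_cast hlower

/-- let `h = {x : ⟪v,x⟫ ≤ c}` be a closed halfplane whose boundary
passes through `q`, `m = |P ∩ h|`, `p ∈ P ∩ h`, and let `n₁, n₂` be the numbers of
points of `P` strictly on each open side of the line `ℓ` through `p` and `q`
(described by a nonzero normal `w` with `⟪w, p - q⟫ = 0`). If `n₁, n₂ ≥ m`, then
`(n₁ − m)(n₂ − m) ≤ ω_{q;P}(p) ≤ n₁n₂`; moreover for `0 < ε ≤ 1`, if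
`n₁, n₂ ≥ 2m/ε` then `(1−ε)n₁n₂ ≤ ω_{q;P}(p) ≤ n₁n₂`. -/
theorem weight_approx_2d (P : Finset (EuclideanSpace ℝ (Fin 2)))
    (q : EuclideanSpace ℝ (Fin 2)) (hqP : q ∉ P)
    (hgp : ∀ S : Finset (EuclideanSpace ℝ (Fin 2)),
      ↑S ⊆ (↑P ∪ {q} : Set (EuclideanSpace ℝ (Fin 2))) → S.card = 3 →
        AffineIndependent ℝ (fun x : S => (x : EuclideanSpace ℝ (Fin 2))))
    (v : EuclideanSpace ℝ (Fin 2)) (c : ℝ) (hv : v ≠ 0)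
    (hqc : (inner ℝ v q : ℝ) = c)
    (m : ℕ)
    (hm : m = {x ∈ (P : Set (EuclideanSpace ℝ (Fin 2))) | (inner ℝ v x : ℝ) ≤ c}.ncard)
    (p : EuclideanSpace ℝ (Fin 2)) (hpP : p ∈ P) (hph : (inner ℝ v p : ℝ) ≤ c)
    (w : EuclideanSpace ℝ (Fin 2)) (hw : w ≠ 0) (hperp : (inner ℝ w (p - q) : ℝ) = 0)
    (n₁ n₂ : ℕ)
    (hn₁ : n₁ = {x ∈ (P : Set (EuclideanSpace ℝ (Fin 2))) |
      0 < (inner ℝ w (x - q) : ℝ)}.ncard)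
    (hn₂ : n₂ = {x ∈ (P : Set (EuclideanSpace ℝ (Fin 2))) |
      (inner ℝ w (x - q) : ℝ) < 0}.ncard)
    (hmn₁ : m ≤ n₁) (hmn₂ : m ≤ n₂) :
    ((n₁ - m) * (n₂ - m) ≤ weight2 P q p ∧ weight2 P q p ≤ n₁ * n₂) ∧
    ∀ ε : ℝ, 0 < ε → ε ≤ 1 → 2 * m / ε ≤ (n₁ : ℝ) → 2 * m / ε ≤ (n₂ : ℝ) →
      (1 - ε) * n₁ * n₂ ≤ (weight2 P q p : ℝ) ∧ (weight2 P q p : ℝ) ≤ n₁ * n₂ :=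
  weight_approx_2d_general P q hqP hgp v c hqc m hm p hpP hph w hw hperp n₁ n₂ hn₁ hn₂ hmn₁ hmn₂
end

section
/- Let d ≥ 1 and let P ⊂ ℝ^d be a finite set of n points. Define P̃ = {(p, 1) : p ∈ P} ⊂ ℝ^{d+1}, let e denote the (d+1)-st standard basis vector of ℝ^{d+1}, and let Q = P̃ ∪ {−e, −2e} (so |Q| = n + 2). Let k_d be the number of d-element subsets P' ⊆ P with 0 ∈ convexHull(P'). Then σ_Q(0) = 2·σ_P(0) + k_d, where σ_Q(0) counts the (d+2)-element subsets of Q ⊂ ℝ^{d+1} containing the origin in their convex hull and σ_P(0) counts the (d+1)-element subsets of P ⊂ ℝ^d containing the origin in their convex hull. In particular, k_d = σ_Q(0) − 2σ_P(0), so the d-Carathéodory problem for P (deciding whether some d-element subset of P contains 0 in its convex hull) reduces to two simplicial depth computations. -/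
/-!
Identify `ℝ^{d+1}` with `ℝ^d × ℝ`, so that `P̃` is `P × {1}` and `-e, -2e` lie on the open ray
`{0} × (-∞, 0)`. Every subset of `Q` is `T̃ ∪ X` with `T ⊆ P` and `X ⊆ {-e, -2e}`. If `X = ∅`, the
hull lies in the hyperplane of last coordinate `1` and misses `0`. Otherwise the hull of `X` lies on
the ray, the hull of `T̃` is `conv(T) × {1}`, and `0` lies on a segment from `(p, 1)` to a point
of the ray exactly when `p = 0`; so `0 ∈ conv(T̃ ∪ X) ↔ 0 ∈ conv T`. Counting the subsets of size
`d + 2` by `X` gives two copies of `σ_P(0)` (`|X| = 1`) and `k_d` (`|X| = 2`).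
-/

open scoped Classical

/-- The lift `ℝ^d → ℝ^{d+1}` appending a last coordinate equal to `1`. -/
noncomputable def liftOne (d : ℕ) (p : EuclideanSpace ℝ (Fin d)) :
    EuclideanSpace ℝ (Fin (d + 1)) :=
  (EuclideanSpace.equiv (Fin (d + 1)) ℝ).symm
    (Fin.snoc (EuclideanSpace.equiv (Fin d) ℝ p) 1)

open Set Function

variable {E F : Type*} [AddCommGroup E] [AddCommGroup F]

variable (E) in
def negVerticalRay : Set (E × ℝ) := {0} ×ˢ Iio 0

theorem mem_negVerticalRay {y : E × ℝ} : y ∈ negVerticalRay E ↔ y.1 = 0 ∧ y.2 < 0 := Iff.rfl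

variable [Module ℝ E] [Module ℝ F]

theorem convex_negVerticalRay : Convex ℝ (negVerticalRay E) :=
  (convex_singleton 0).prod (convex_Iio 0)

noncomputable def hullCount (P : Finset E) (k : ℕ) (q : E) : ℕ :=
  {S : Finset E | S ⊆ P ∧ S.card = k ∧ q ∈ convexHull ℝ (S : Set E)}.ncard

theorem hullCount_eq_sum (P : Finset E) (k : ℕ) (q : E) :
    hullCount P k q =
      ∑ S ∈ P.powerset, if S.card = k ∧ q ∈ convexHull ℝ (S : Set E) then 1 else 0 := by
  rw [← Finset.card_filter, hullCount, ← Set.ncard_coe_finset]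
  congr 1
  ext S
  simp

theorem hullCount_image [DecidableEq E] [DecidableEq F] {f : E →ₗ[ℝ] F} (hf : Injective f)
    (P : Finset E) (k : ℕ) (q : E) :
    hullCount (P.image f) k (f q) = hullCount P k q := by
  rw [hullCount_eq_sum, hullCount_eq_sum, Finset.powerset_image,
    Finset.sum_image fun S _ T _ h => Finset.image_injective hf h]
  refine Finset.sum_congr rfl fun S _ => ?_
  rw [Finset.card_image_of_injective _ hf, Finset.coe_image, ← LinearMap.image_convexHull,
    hf.mem_set_image]

variable (E) in
def appendOne : E →ᵃ[ℝ] E × ℝ := (AffineMap.id ℝ E).prod (AffineMap.const ℝ E (1 : ℝ))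

@[simp]
theorem appendOne_apply (p : E) : appendOne E p = (p, 1) := rfl

theorem appendOne_injective : Injective (appendOne E) := fun _ _ h => congrArg Prod.fst h

theorem appendOne_notMem_negVerticalRay (p : E) : appendOne E p ∉ negVerticalRay E := by
  simp [mem_negVerticalRay]

theorem notMem_image_appendOne_of_mem_negVerticalRay [DecidableEq E] {y : E × ℝ}
    (hy : y ∈ negVerticalRay E) (T : Finset E) : y ∉ T.image (appendOne E) := by
  intro hyT
  obtain ⟨p, -, rfl⟩ := Finset.mem_image.1 hyT
  exact appendOne_notMem_negVerticalRay p hy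

theorem zero_notMem_convexHull_image_appendOne (A : Set E) :
    (0 : E × ℝ) ∉ convexHull ℝ (appendOne E '' A) := by
  rw [← AffineMap.image_convexHull]
  rintro ⟨p, -, hp⟩
  simp_all

theorem zero_mem_segment_appendOne_iff {y : E × ℝ} (hy : y ∈ negVerticalRay E)
    (a : E) : (0 : E × ℝ) ∈ segment ℝ y (appendOne E a) ↔ a = 0 := by
  obtain ⟨y, c⟩ := y
  obtain ⟨rfl, hc : c < 0⟩ := mem_negVerticalRay.1 hy
  constructor
  · rintro ⟨s, t, hs, ht, hst, h⟩
    have h₁ : t • a = 0 := by simpa using congrArg Prod.fst h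
    have h₂ : s * c + t = 0 := by simpa using congrArg Prod.snd h
    have ht : t ≠ 0 := by rintro rfl; nlinarith
    exact (smul_eq_zero.1 h₁).resolve_left ht
  · rintro rfl
    have hc' : 0 < 1 - c := by linarith
    -- weights in the ratio `1 : -c` cancel the last coordinates `c` and `1`
    refine ⟨1 / (1 - c), -c / (1 - c), by positivity, div_nonneg (by linarith) hc'.le,
      by field_simp; ring, ?_⟩
    ext
    · simp
    · simp only [appendOne_apply, Prod.smul_mk, smul_eq_mul, Prod.mk_add_mk, Prod.snd_zero]
      field_simp
      ring

theorem zero_mem_convexHull_union_image_appendOne_iff {B : Set (E × ℝ)}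
    (hB : B ⊆ negVerticalRay E) (hBne : B.Nonempty) (A : Set E) :
    (0 : E × ℝ) ∈ convexHull ℝ (B ∪ appendOne E '' A) ↔ (0 : E) ∈ convexHull ℝ A := by
  have hBhull : convexHull ℝ B ⊆ negVerticalRay E := convexHull_min hB convex_negVerticalRay
  rcases A.eq_empty_or_nonempty with rfl | hA
  · simp only [image_empty, union_empty, convexHull_empty, mem_empty_iff_false, iff_false]
    exact fun h => (lt_irrefl (0 : ℝ)) (hBhull h).2
  rw [convexHull_union hBne (hA.image _), ← AffineMap.image_convexHull, mem_convexJoin]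
  constructor
  · rintro ⟨y, hy, _, ⟨a, ha, rfl⟩, h0⟩
    rwa [← (zero_mem_segment_appendOne_iff (hBhull hy) a).1 h0]
  · intro h0
    obtain ⟨y, hy⟩ := hBne
    exact ⟨y, subset_convexHull ℝ B hy, _, ⟨0, h0, rfl⟩,
      (zero_mem_segment_appendOne_iff (hB hy) 0).2 rfl⟩

theorem card_union_image_appendOne [DecidableEq E] {X : Finset (E × ℝ)}
    (hX : (X : Set (E × ℝ)) ⊆ negVerticalRay E) (T : Finset E) :
    (X ∪ T.image (appendOne E)).card = X.card + T.card := by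
  rw [Finset.card_union_of_disjoint, Finset.card_image_of_injective _ appendOne_injective]
  exact Finset.disjoint_left.2 fun x hxX =>
    notMem_image_appendOne_of_mem_negVerticalRay (hX hxX) T

theorem card_eq_and_zero_mem_convexHull_union_image_appendOne_iff [DecidableEq E]
    {X : Finset (E × ℝ)} (hX : (X : Set (E × ℝ)) ⊆ negVerticalRay E) (hXne : X.Nonempty)
    (T : Finset E) (m : ℕ) :
    ((X ∪ T.image (appendOne E)).card = m ∧
        (0 : E × ℝ) ∈ convexHull ℝ ((X ∪ T.image (appendOne E) : Finset (E × ℝ)) : Set (E × ℝ)))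
      ↔ X.card + T.card = m ∧ (0 : E) ∈ convexHull ℝ (T : Set E) := by
  rw [card_union_image_appendOne hX, Finset.coe_union, Finset.coe_image,
    zero_mem_convexHull_union_image_appendOne_iff hX hXne]

theorem hullCount_insert_insert_image_appendOne [DecidableEq E]
    {u v : E × ℝ} (hu : u ∈ negVerticalRay E) (hv : v ∈ negVerticalRay E)
    (huv : u ≠ v) (P : Finset E) (k : ℕ) :
    hullCount (insert u (insert v (P.image (appendOne E)))) (k + 2) 0 =
      2 * hullCount P (k + 1) 0 + hullCount P k 0 := by
  have hu' : u ∉ insert v (P.image (appendOne E)) := fun h =>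
    (Finset.mem_insert.1 h).elim huv (notMem_image_appendOne_of_mem_negVerticalRay hu P)
  -- split the subsets `S` according to `S ∩ {u, v}`
  simp only [hullCount_eq_sum, Finset.sum_powerset_insert hu',
    Finset.sum_powerset_insert (notMem_image_appendOne_of_mem_negVerticalRay hv P),
    Finset.powerset_image,
    Finset.sum_image fun S _ T _ h => Finset.image_injective appendOne_injective h,
    Finset.mul_sum, ← Finset.sum_add_distrib]
  refine Finset.sum_congr rfl fun T _ => ?_
  have hv₁ : (({v} : Finset (E × ℝ)) : Set (E × ℝ)) ⊆ negVerticalRay E := by simpa using hv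
  have hu₁ : (({u} : Finset (E × ℝ)) : Set (E × ℝ)) ⊆ negVerticalRay E := by simpa using hu
  have huv₂ : (({u, v} : Finset (E × ℝ)) : Set (E × ℝ)) ⊆ negVerticalRay E := by
    simp [Set.insert_subset_iff, hu, hv]
  simp only [Finset.insert_eq, ← Finset.union_assoc]
  simp only [← Finset.insert_eq u {v},
    card_eq_and_zero_mem_convexHull_union_image_appendOne_iff hv₁ (Finset.singleton_nonempty v),
    card_eq_and_zero_mem_convexHull_union_image_appendOne_iff hu₁ (Finset.singleton_nonempty u),
    card_eq_and_zero_mem_convexHull_union_image_appendOne_iff huv₂ (Finset.insert_nonempty u {v}),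
    Finset.coe_image, zero_notMem_convexHull_image_appendOne, and_false, if_false,
    Finset.card_singleton, Finset.card_pair huv]
  by_cases h : (0 : E) ∈ convexHull ℝ (T : Set E) <;> simp only [h, and_true, and_false] <;>
    split_ifs <;> omega

theorem simplicialDepth_eq_hullCount (d : ℕ) (P : Finset (EuclideanSpace ℝ (Fin d)))
    (q : EuclideanSpace ℝ (Fin d)) : simplicialDepth d P q = hullCount P (d + 1) q := rfl

noncomputable def snocLinearMap (d : ℕ) :
    EuclideanSpace ℝ (Fin d) × ℝ →ₗ[ℝ] EuclideanSpace ℝ (Fin (d + 1)) where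
  toFun x := (EuclideanSpace.equiv (Fin (d + 1)) ℝ).symm
    (Fin.snoc (EuclideanSpace.equiv (Fin d) ℝ x.1) x.2)
  map_add' x y := by
    ext i
    refine Fin.lastCases ?_ (fun j => ?_) i <;> simp
  map_smul' c x := by
    ext i
    refine Fin.lastCases ?_ (fun j => ?_) i <;> simp

theorem snocLinearMap_comp_appendOne (d : ℕ) :
    ⇑(snocLinearMap d) ∘ appendOne (EuclideanSpace ℝ (Fin d)) = liftOne d := rfl

theorem snocLinearMap_zero_left (d : ℕ) (t : ℝ) :
    snocLinearMap d (0, t) = t • EuclideanSpace.single (Fin.last d) (1 : ℝ) := by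
  ext i
  refine Fin.lastCases ?_ (fun j => ?_) i
  · simp [snocLinearMap]
  · simp [snocLinearMap, (Fin.castSucc_lt_last j).ne]

theorem snocLinearMap_injective (d : ℕ) : Injective (snocLinearMap d) := by
  rintro ⟨p, s⟩ ⟨q, t⟩ h
  have hlast := congrArg (· (Fin.last d)) h
  have hinit := fun i : Fin d => congrArg (· i.castSucc) h
  simp [snocLinearMap] at hlast hinit
  exact Prod.ext (PiLp.ext hinit) hlast

theorem simplicialDepth_caratheodory_reduction_general (d : ℕ)
    (P : Finset (EuclideanSpace ℝ (Fin d)))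
    (e : EuclideanSpace ℝ (Fin (d + 1)))
    (he : e = EuclideanSpace.single (Fin.last d) (1 : ℝ))
    (Q : Finset (EuclideanSpace ℝ (Fin (d + 1))))
    (hQ : Q = P.image (liftOne d) ∪ {-e, -((2 : ℝ) • e)})
    (kd : ℕ)
    (hkd : kd = {S : Finset (EuclideanSpace ℝ (Fin d)) |
      S ⊆ P ∧ S.card = d ∧
        (0 : EuclideanSpace ℝ (Fin d)) ∈
          convexHull ℝ (S : Set (EuclideanSpace ℝ (Fin d)))}.ncard) :
    simplicialDepth (d + 1) Q 0 = 2 * simplicialDepth d P 0 + kd := by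
  have hQ' : Q = (insert (0, -1) (insert (0, -2)
      (P.image (appendOne (EuclideanSpace ℝ (Fin d)))))).image (snocLinearMap d) := by
    rw [hQ, Finset.image_insert, Finset.image_insert, Finset.image_image,
      snocLinearMap_comp_appendOne, snocLinearMap_zero_left, snocLinearMap_zero_left, ← he,
      neg_smul, neg_smul, one_smul, Finset.union_comm, Finset.insert_union, Finset.singleton_union]
  rw [simplicialDepth_eq_hullCount, simplicialDepth_eq_hullCount, hQ',
    ← map_zero (snocLinearMap d), hullCount_image (snocLinearMap_injective d), hkd]
  exact hullCount_insert_insert_image_appendOne (by simp [mem_negVerticalRay])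
    (by simp [mem_negVerticalRay]) (by simp) P d

/-- with `P̃ = {(p,1) : p ∈ P}`, `e` the `(d+1)`-st standard basis
vector, `Q = P̃ ∪ {−e, −2e}`, and `k_d` the number of `d`-element subsets of `P`
containing `0` in their convex hull, we have `σ_Q(0) = 2σ_P(0) + k_d`. -/
theorem simplicialDepth_caratheodory_reduction (d : ℕ) (hd : 1 ≤ d)
    (P : Finset (EuclideanSpace ℝ (Fin d))) (n : ℕ) (hn : P.card = n)
    (e : EuclideanSpace ℝ (Fin (d + 1)))
    (he : e = EuclideanSpace.single (Fin.last d) (1 : ℝ))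
    (Q : Finset (EuclideanSpace ℝ (Fin (d + 1))))
    (hQ : Q = P.image (liftOne d) ∪ {-e, -((2 : ℝ) • e)})
    (kd : ℕ)
    (hkd : kd = {S : Finset (EuclideanSpace ℝ (Fin d)) |
      S ⊆ P ∧ S.card = d ∧
        (0 : EuclideanSpace ℝ (Fin d)) ∈
          convexHull ℝ (S : Set (EuclideanSpace ℝ (Fin d)))}.ncard) :
    simplicialDepth (d + 1) Q 0 = 2 * simplicialDepth d P 0 + kd :=
  simplicialDepth_caratheodory_reduction_general d P e he Q hQ kd hkd
end

section
/- Let d ≥ 1, let P ⊂ ℝ^d be a finite set of n points, q ∈ ℝ^d, let h be a closed halfspace with q ∈ h, and let p ∈ P with p ∉ h. Then ω_{q;P}(p) ≤ |P ∩ h| · n^{d−1}, i.e., the number of (d+1)-element subsets of P that contain p and contain q in their convex hull is at most the number of points of P in h times n^{d−1}. -/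
/-! Since `q` lies in `h`, every simplex counted by `ω_{q;P}(p)` has a vertex `x` in `h`: a linear
functional attains its minimum over a convex hull at a generator. Such a simplex is `{p, x} ∪ T`
with `T` a `(d - 1)`-subset of `P`, so there are at most `|P ∩ h| · C(n, d - 1) ≤ |P ∩ h| · n^{d-1}`
of them. -/

open Finset

theorem Finset.card_powersetCard_filter_mem_and_exists_le {α : Type*} [DecidableEq α]
    (P : Finset α) (r : α → Prop) [DecidablePred r] {p : α} (hp : ¬ r p) (k : ℕ) :
    #{S ∈ P.powersetCard (k + 1) | p ∈ S ∧ ∃ x ∈ S, r x} ≤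
      #{x ∈ P | r x} * (#P).choose (k - 1) := by
  have hcover : {S ∈ P.powersetCard (k + 1) | p ∈ S ∧ ∃ x ∈ S, r x} ⊆
      {x ∈ P | r x}.biUnion fun x =>
        (P.powersetCard (k - 1)).image fun T => insert x (insert p T) := by
    intro S hS
    obtain ⟨hSP, hcard⟩ := mem_powersetCard.1 (mem_filter.1 hS).1
    obtain ⟨hpS, x, hxS, hx⟩ := (mem_filter.1 hS).2
    have hpx : p ∈ S.erase x := mem_erase.2 ⟨fun h => hp (h ▸ hx), hpS⟩
    refine mem_biUnion.2 ⟨x, mem_filter.2 ⟨hSP hxS, hx⟩,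
      mem_image.2 ⟨(S.erase x).erase p, mem_powersetCard.2 ⟨?_, ?_⟩, ?_⟩⟩
    · exact (erase_subset _ _).trans ((erase_subset _ _).trans hSP)
    · rw [card_erase_of_mem hpx, card_erase_of_mem hxS, hcard]
      omega
    · rw [insert_erase hpx, insert_erase hxS]
  calc _ ≤ #({x ∈ P | r x}.biUnion fun x =>
          (P.powersetCard (k - 1)).image fun T => insert x (insert p T)) := card_le_card hcover
    _ ≤ ∑ x ∈ P with r x, #((P.powersetCard (k - 1)).image fun T => insert x (insert p T)) :=
          card_biUnion_le
    _ ≤ ∑ x ∈ P with r x, (#P).choose (k - 1) :=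
          sum_le_sum fun _ _ => card_image_le.trans (card_powersetCard _ _).le
    _ = _ := by rw [sum_const, smul_eq_mul]

theorem weight_le_halfspace_count_general (d : ℕ)
    (P : Finset (EuclideanSpace ℝ (Fin d))) (q : EuclideanSpace ℝ (Fin d))
    (v : EuclideanSpace ℝ (Fin d)) (c : ℝ)
    (hq : (inner ℝ v q : ℝ) ≤ c)
    (p : EuclideanSpace ℝ (Fin d)) (hph : ¬ (inner ℝ v p : ℝ) ≤ c) :
    weight d P q p ≤
      {x ∈ (P : Set (EuclideanSpace ℝ (Fin d))) | (inner ℝ v x : ℝ) ≤ c}.ncard *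
        P.card ^ (d - 1) := by
  classical
  have hsimplices :
      weight d P q p ≤ #{S ∈ P.powersetCard (d + 1) | p ∈ S ∧ ∃ x ∈ S, inner ℝ v x ≤ c} := by
    rw [weight, ← Set.ncard_coe_finset]
    refine Set.ncard_le_ncard fun S ⟨hSP, hcard, hpS, hqS⟩ => ?_
    obtain ⟨x, hxS, hx⟩ := ((innerₗ _ v).concaveOn convex_univ).exists_le_of_mem_convexHull
      (Set.subset_univ _) hqS
    simpa [hSP, hcard, hpS] using ⟨x, hxS, hx.trans hq⟩
  have hcount : {x ∈ (P : Set (EuclideanSpace ℝ (Fin d))) | inner ℝ v x ≤ c}.ncard =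
      #{x ∈ P | inner ℝ v x ≤ c} := by
    rw [← Set.ncard_coe_finset, coe_filter]
    rfl
  calc weight d P q p ≤ #{x ∈ P | inner ℝ v x ≤ c} * (#P).choose (d - 1) :=
        hsimplices.trans (P.card_powersetCard_filter_mem_and_exists_le _ hph d)
    _ ≤ _ := hcount ▸ Nat.mul_le_mul_left _ (Nat.choose_le_pow _ _)

/-- if `h = {x : ⟪v,x⟫ ≤ c}` is a closed halfspace containing `q` and
`p ∈ P` lies outside `h`, then `ω_{q;P}(p) ≤ |P ∩ h| · n^{d−1}`. -/
theorem weight_le_halfspace_count (d : ℕ) (hd : 1 ≤ d)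
    (P : Finset (EuclideanSpace ℝ (Fin d))) (q : EuclideanSpace ℝ (Fin d))
    (v : EuclideanSpace ℝ (Fin d)) (c : ℝ) (hv : v ≠ 0)
    (hq : (inner ℝ v q : ℝ) ≤ c)
    (p : EuclideanSpace ℝ (Fin d)) (hpP : p ∈ P) (hph : ¬ (inner ℝ v p : ℝ) ≤ c) :
    weight d P q p ≤
      {x ∈ (P : Set (EuclideanSpace ℝ (Fin d))) | (inner ℝ v x : ℝ) ≤ c}.ncard *
        P.card ^ (d - 1) :=
  weight_le_halfspace_count_general d P q v c hq p hph
end
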